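/- Let x ∈ ℕ^k, let i ≠ j be two indices, let δ_j ∈ ℕ with x_j ≥ δ_j + 1, and let B ∈ ℕ. Then P[ Σ_{n ≠ i,j} X_{n,x_n} + X_{j, x_j − δ_j − 1} ≥ B − X_{i, x_i + 1} ] ≤ P[ Σ_{n ≠ i,j} X_{n,x_n} + X_{j, x_j − δ_j − 1} ≥ B − 1 − X_{i, x_i} ], where on each side all the binomial random variables appearing are mutually independent. -/
import Mathlib


open Finset

/-- PMF of a Binomial(m, p) random variable at value `s`. -/
noncomputable def binomPMF (p : ℝ) (m s : ℕ) : ℝ :=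
  (m.choose s : ℝ) * p ^ s * (1 - p) ^ (m - s)

/-- Expectation of `g` applied to a vector of independent binomial random variables,
where coordinate `j` is Binomial(x j, p j). -/
noncomputable def jointExp {k : ℕ} (p : Fin k → ℝ) (x : Fin k → ℕ)
    (g : (Fin k → ℕ) → ℝ) : ℝ :=
  ∑ a ∈ Fintype.piFinset (fun j => Finset.range (x j + 1)),
    (∏ j, binomPMF (p j) (x j) (a j)) * g a

open Classical in
/-- Probability of the event `E` for a vector of independent binomial random
variables, coordinate `j` being Binomial(x j, p j). -/
noncomputable def jointProb {k : ℕ} (p : Fin k → ℝ) (x : Fin k → ℕ)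
    (E : (Fin k → ℕ) → Prop) : ℝ :=
  jointExp p x (fun a => if E a then 1 else 0)

/-- P[S(x) ≥ B], where S(x) = Σ_j X_{j, x_j} is Poisson binomial. -/
noncomputable def showTail {k : ℕ} (p : Fin k → ℝ) (x : Fin k → ℕ) (B : ℕ) : ℝ :=
  jointProb p x (fun a => B ≤ ∑ j, a j)

/-- Expected compensation V_B(x) = E[(S(x) − B)^+]. -/
noncomputable def VB {k : ℕ} (p : Fin k → ℝ) (B : ℕ) (x : Fin k → ℕ) : ℝ :=
  jointExp p x (fun a => max ((∑ j, a j : ℝ) - B) 0)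

/-- Objective of the offline problem with past accepted counts `y`:
f(x) = Σ_j v_j (y_j + x_j) − V_B(y + x). -/
noncomputable def objFn {k : ℕ} (v p : Fin k → ℝ) (B : ℕ) (y x : Fin k → ℕ) : ℝ :=
  ∑ j, v j * ((y j : ℝ) + (x j : ℝ)) - VB p B (fun j => y j + x j)

/-- Feasibility for the offline problem with demand bounds `n`. -/
def Feasible {k : ℕ} (n x : Fin k → ℕ) : Prop := ∀ j, x j ≤ n j

/-- `x` is locally optimal at `j`: `x j` is the largest element of the argmax,
over `z ∈ {0,…,n j}`, of `z · v_j − V_B(y + x + (z − x_j)·e_j)`. -/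
def LocallyOpt {k : ℕ} (v p : Fin k → ℝ) (B : ℕ) (n y : Fin k → ℕ)
    (x : Fin k → ℕ) (j : Fin k) : Prop :=
  ∀ z ≤ n j,
    ((z : ℝ) * v j - VB p B (fun i => y i + Function.update x j z i)
        ≤ (x j : ℝ) * v j - VB p B (fun i => y i + x i)) ∧
    (x j < z →
      (z : ℝ) * v j - VB p B (fun i => y i + Function.update x j z i)
        < (x j : ℝ) * v j - VB p B (fun i => y i + x i))

lemma binomPMF_nonneg {p : ℝ} (h0 : 0 ≤ p) (h1 : p ≤ 1) (m s : ℕ) :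
    0 ≤ binomPMF p m s := by
  have h2 : (0:ℝ) ≤ 1 - p := by linarith
  unfold binomPMF
  positivity

lemma binomPMF_succ (p : ℝ) (m s : ℕ) :
    binomPMF p (m + 1) (s + 1)
      = p * binomPMF p m s + (1 - p) * binomPMF p m (s + 1) := by
  unfold binomPMF
  rw [Nat.succ_sub_succ, Nat.choose_succ_succ, Nat.cast_add]
  rcases lt_or_ge s m with h | h
  · have : m - s = (m - (s + 1)) + 1 := by omega
    rw [this]
    ring
  · have h1 : m.choose (s + 1) = 0 := Nat.choose_eq_zero_of_lt (by omega)
    rw [h1]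
    push_cast
    ring

lemma binomPMF_top (p : ℝ) (m : ℕ) : binomPMF p m (m + 1) = 0 := by
  unfold binomPMF
  rw [Nat.choose_eq_zero_of_lt (by omega)]
  simp

lemma bern_split (p : ℝ) (m : ℕ) (f : ℕ → ℝ) :
    ∑ s ∈ Finset.range (m + 2), binomPMF p (m + 1) s * f s
      = ∑ s ∈ Finset.range (m + 1),
          binomPMF p m s * ((1 - p) * f s + p * f (s + 1)) := by
  rw [Finset.sum_range_succ' (fun s => binomPMF p (m + 1) s * f s) (m + 1)]
  have e1 : ∀ s ∈ Finset.range (m + 1),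
      binomPMF p (m + 1) (s + 1) * f (s + 1)
        = p * binomPMF p m s * f (s + 1)
          + (1 - p) * binomPMF p m (s + 1) * f (s + 1) := by
    intro s _
    rw [binomPMF_succ]; ring
  rw [Finset.sum_congr rfl e1, Finset.sum_add_distrib]
  have e2 : ∑ s ∈ Finset.range (m + 1), (1 - p) * binomPMF p m (s + 1) * f (s + 1)
      = ∑ s ∈ Finset.range (m + 1), (1 - p) * binomPMF p m s * f s
        - (1 - p) * binomPMF p m 0 * f 0 := by
    have h := Finset.sum_range_succ' (fun s => (1 - p) * binomPMF p m s * f s) (m + 1)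
    have h2 := Finset.sum_range_succ (fun s => (1 - p) * binomPMF p m s * f s) (m + 1)
    simp only [binomPMF_top, mul_zero, zero_mul, add_zero] at h2
    rw [h2] at h
    linarith
  rw [e2]
  have e3 : binomPMF p (m + 1) 0 * f 0 = (1 - p) * binomPMF p m 0 * f 0 := by
    unfold binomPMF
    simp only [Nat.choose_zero_right, Nat.cast_one, pow_zero, Nat.sub_zero, one_mul]
    rw [pow_succ]
    ring
  rw [e3]
  have e4 : ∑ s ∈ Finset.range (m + 1), binomPMF p m s * ((1 - p) * f s + p * f (s + 1))
      = ∑ s ∈ Finset.range (m + 1), (1 - p) * binomPMF p m s * f s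
        + ∑ s ∈ Finset.range (m + 1), p * binomPMF p m s * f (s + 1) := by
    rw [← Finset.sum_add_distrib]
    apply Finset.sum_congr rfl
    intro s _
    ring
  rw [e4]
  ring

lemma sum_piFinset_split {k : ℕ} (t : Fin k → Finset ℕ) (i : Fin k)
    (F : (Fin k → ℕ) → ℝ) :
    ∑ a ∈ Fintype.piFinset t, F a
      = ∑ b ∈ Fintype.piFinset (Function.update t i {0}),
          ∑ s ∈ t i, F (Function.update b i s) := by
  rw [← Finset.sum_product']
  apply Finset.sum_nbij' (i := fun a => (Function.update a i 0, a i))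
    (j := fun q => Function.update q.1 i q.2)
  · intro a ha
    rw [Finset.mem_product]
    constructor
    · rw [Fintype.mem_piFinset]
      intro m
      by_cases hm : m = i
      · subst hm; simp
      · simp only [Function.update_of_ne hm]
        exact Fintype.mem_piFinset.1 ha m
    · exact Fintype.mem_piFinset.1 ha i
  · intro q hq
    rw [Finset.mem_product] at hq
    rw [Fintype.mem_piFinset]
    intro m
    by_cases hm : m = i
    · subst hm; simpa using hq.2
    · rw [Function.update_of_ne hm]
      have := Fintype.mem_piFinset.1 hq.1 m
      rwa [Function.update_of_ne hm] at this
  · intro a _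
    simp [Function.update_idem]
  · intro q hq
    rw [Finset.mem_product] at hq
    have hq1 := Fintype.mem_piFinset.1 hq.1 i
    rw [Function.update_self] at hq1
    simp only [Finset.mem_singleton] at hq1
    ext : 1
    · simp [Function.update_idem, ← hq1]
    · simp
  · intro a _
    simp [Function.update_idem]

lemma key_ineq {k : ℕ} (p : Fin k → ℝ) (hp : ∀ j, 0 ≤ p j ∧ p j ≤ 1)
    (x : Fin k → ℕ) (i : Fin k) (B : ℕ) :
    jointProb p (Function.update x i (x i + 1))
        (fun a => (B : ℤ) - (a i : ℤ) ≤ ∑ m ∈ Finset.univ.erase i, (a m : ℤ))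
      ≤ jointProb p x
        (fun a => (B : ℤ) - 1 - (a i : ℤ) ≤ ∑ m ∈ Finset.univ.erase i, (a m : ℤ)) := by
  classical
  unfold jointProb jointExp
  set t : Fin k → Finset ℕ := fun j => Finset.range (x j + 1) with ht
  have htL : (fun j => Finset.range (Function.update x i (x i + 1) j + 1))
      = Function.update t i (Finset.range (x i + 2)) := by
    funext m
    by_cases hm : m = i
    · subst hm; simp [ht]
    · simp [Function.update_of_ne hm, ht]
  rw [htL]
  rw [sum_piFinset_split (Function.update t i (Finset.range (x i + 2))) i]
  rw [sum_piFinset_split t i]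
  rw [Function.update_idem, Function.update_self]
  apply Finset.sum_le_sum
  intro b hb
  have hsum : ∀ s : ℕ, (∑ m ∈ Finset.univ.erase i, ((Function.update b i s m : ℕ) : ℤ))
      = ∑ m ∈ Finset.univ.erase i, ((b m : ℕ) : ℤ) := by
    intro s
    apply Finset.sum_congr rfl
    intro m hm
    rw [Function.update_of_ne (Finset.ne_of_mem_erase hm)]
  set S : ℤ := ∑ m ∈ Finset.univ.erase i, ((b m : ℕ) : ℤ) with hS
  set W : ℝ := ∏ m ∈ Finset.univ.erase i, binomPMF (p m) (x m) (b m) with hW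
  have hWnn : 0 ≤ W := Finset.prod_nonneg fun m _ => binomPMF_nonneg (hp m).1 (hp m).2 _ _
  have hterm : ∀ (y : Fin k → ℕ) (s : ℕ), (∀ m, m ≠ i → y m = x m) →
      (∏ m, binomPMF (p m) (y m) (Function.update b i s m))
        = binomPMF (p i) (y i) s * W := by
    intro y s hy
    rw [← Finset.mul_prod_erase Finset.univ _ (Finset.mem_univ i)]
    rw [Function.update_self]
    congr 1
    apply Finset.prod_congr rfl
    intro m hm
    have hmi := Finset.ne_of_mem_erase hm
    rw [Function.update_of_ne hmi, hy m hmi]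
  have htermL : ∀ s : ℕ, (∏ m, binomPMF (p m) (Function.update x i (x i + 1) m)
        (Function.update b i s m)) = binomPMF (p i) (x i + 1) s * W := by
    intro s
    rw [hterm _ s (fun m hm => Function.update_of_ne hm _ _), Function.update_self]
  have htermR : ∀ s : ℕ, (∏ m, binomPMF (p m) (x m) (Function.update b i s m))
      = binomPMF (p i) (x i) s * W := fun s => hterm x s (fun _ _ => rfl)
  have hcond : ∀ s : ℕ,
      ((B : ℤ) - ((Function.update b i s i : ℕ) : ℤ)
          ≤ ∑ m ∈ Finset.univ.erase i, ((Function.update b i s m : ℕ) : ℤ))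
        ↔ ((B : ℤ) - (s : ℤ) ≤ S) := by
    intro s
    rw [Function.update_self, hsum s]
  have hcond' : ∀ s : ℕ,
      ((B : ℤ) - 1 - ((Function.update b i s i : ℕ) : ℤ)
          ≤ ∑ m ∈ Finset.univ.erase i, ((Function.update b i s m : ℕ) : ℤ))
        ↔ ((B : ℤ) - 1 - (s : ℤ) ≤ S) := by
    intro s
    rw [Function.update_self, hsum s]
  have hL : (∑ s ∈ Finset.range (x i + 2),
        (∏ m, binomPMF (p m) (Function.update x i (x i + 1) m) (Function.update b i s m)) *
          (@ite ℝ ((B : ℤ) - ((Function.update b i s i : ℕ) : ℤ)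
              ≤ ∑ m ∈ Finset.univ.erase i, ((Function.update b i s m : ℕ) : ℤ))
            (Classical.propDecidable _) 1 0))
      = ∑ s ∈ Finset.range (x i + 2), binomPMF (p i) (x i + 1) s * W *
          (if (B : ℤ) - (s : ℤ) ≤ S then 1 else 0) := by
    apply Finset.sum_congr rfl
    intro s _
    rw [htermL s]
    by_cases hc : (B : ℤ) - (s : ℤ) ≤ S
    · rw [if_pos ((hcond s).mpr hc), if_pos hc]
    · rw [if_neg (fun h => hc ((hcond s).mp h)), if_neg hc]
  have hR : (∑ s ∈ t i,
        (∏ m, binomPMF (p m) (x m) (Function.update b i s m)) *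
          (@ite ℝ ((B : ℤ) - 1 - ((Function.update b i s i : ℕ) : ℤ)
              ≤ ∑ m ∈ Finset.univ.erase i, ((Function.update b i s m : ℕ) : ℤ))
            (Classical.propDecidable _) 1 0))
      = ∑ s ∈ Finset.range (x i + 1), binomPMF (p i) (x i) s * W *
          (if (B : ℤ) - 1 - (s : ℤ) ≤ S then 1 else 0) := by
    rw [ht]
    apply Finset.sum_congr rfl
    intro s _
    rw [htermR s]
    by_cases hc : (B : ℤ) - 1 - (s : ℤ) ≤ S
    · rw [if_pos ((hcond' s).mpr hc), if_pos hc]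
    · rw [if_neg (fun h => hc ((hcond' s).mp h)), if_neg hc]
  beta_reduce
  rw [hL, hR]
  have hb1 : ∀ s : ℕ, binomPMF (p i) (x i + 1) s * W * (if (B : ℤ) - (s : ℤ) ≤ S then 1 else 0)
      = W * (binomPMF (p i) (x i + 1) s * (if (B : ℤ) - (s : ℤ) ≤ S then 1 else 0)) := by
    intro s; ring
  have hb2 : ∀ s : ℕ, binomPMF (p i) (x i) s * W * (if (B : ℤ) - 1 - (s : ℤ) ≤ S then 1 else 0)
      = W * (binomPMF (p i) (x i) s * (if (B : ℤ) - 1 - (s : ℤ) ≤ S then 1 else 0)) := by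
    intro s; ring
  simp only [hb1, hb2]
  rw [← Finset.mul_sum, ← Finset.mul_sum]
  apply mul_le_mul_of_nonneg_left _ hWnn
  rw [bern_split (p i) (x i) (fun s => if (B : ℤ) - (s : ℤ) ≤ S then 1 else 0)]
  apply Finset.sum_le_sum
  intro s _
  apply mul_le_mul_of_nonneg_left _ (binomPMF_nonneg (hp i).1 (hp i).2 _ _)
  have h1 : ((if (B : ℤ) - (s : ℤ) ≤ S then (1:ℝ) else 0))
      ≤ (if (B : ℤ) - 1 - (s : ℤ) ≤ S then (1:ℝ) else 0) := by
    split_ifs with hA hB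
    · exact le_refl _
    · exact absurd (by linarith : (B : ℤ) - 1 - (s : ℤ) ≤ S) hB
    · norm_num
    · exact le_refl _
  have h2 : ((if (B : ℤ) - ((s:ℕ) + 1 : ℕ) ≤ S then (1:ℝ) else 0))
      = (if (B : ℤ) - 1 - (s : ℤ) ≤ S then (1:ℝ) else 0) := by
    have : (B : ℤ) - ((s + 1 : ℕ) : ℤ) = (B : ℤ) - 1 - (s : ℤ) := by push_cast; ring
    rw [this]
  simp only [h2]
  have hq : 0 ≤ 1 - p i := by linarith [(hp i).2]
  have hpnn := (hp i).1
  set c := (if (B : ℤ) - (s : ℤ) ≤ S then (1:ℝ) else 0)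
  set d := (if (B : ℤ) - 1 - (s : ℤ) ≤ S then (1:ℝ) else 0)
  nlinarith [h1]

/-- **Claim 2 (shifting one success).**  For `x ∈ ℕ^k`, indices `i ≠ j`, `δj` with
`x j ≥ δj + 1`, and any capacity `B`:
`P[Σ_{n≠i,j} X_{n,x_n} + X_{j,x_j−δj−1} ≥ B − X_{i,x_i+1}]
  ≤ P[Σ_{n≠i,j} X_{n,x_n} + X_{j,x_j−δj−1} ≥ B − 1 − X_{i,x_i}]`,
with all binomial variables on each side mutually independent. -/
theorem shift_one_success {k : ℕ} (p : Fin k → ℝ)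
    (hp : ∀ j, 0 < p j ∧ p j < 1)
    (x : Fin k → ℕ) (i j : Fin k) (hij : i ≠ j)
    (δj : ℕ) (hx : δj + 1 ≤ x j) (B : ℕ) :
    jointProb p
        (fun m => if m = i then x m + 1 else if m = j then x m - (δj + 1) else x m)
        (fun a => (B : ℤ) - (a i : ℤ) ≤ ∑ m ∈ Finset.univ.erase i, (a m : ℤ))
      ≤ jointProb p
        (fun m => if m = j then x m - (δj + 1) else x m)
        (fun a => (B : ℤ) - 1 - (a i : ℤ) ≤ ∑ m ∈ Finset.univ.erase i, (a m : ℤ)) := by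
  have hxv : (fun m => if m = i then x m + 1 else if m = j then x m - (δj + 1) else x m)
      = Function.update (fun m => if m = j then x m - (δj + 1) else x m) i
          ((fun m => if m = j then x m - (δj + 1) else x m) i + 1) := by
    funext m
    by_cases hm : m = i
    · subst hm
      rw [Function.update_self]
      simp [hij]
    · rw [Function.update_of_ne hm, if_neg hm]
  rw [hxv]
  exact key_ineq p (fun j => ⟨(hp j).1.le, (hp j).2.le⟩) _ i B
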